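/- arXiv:1602.03341 — 2 statements merged into one kernel-verified Lean document; each statement's English description precedes it below -/
import Mathlib

section
/- If a group G satisfies condition (∗), then the FC-center of G is trivial: Δ(G) = 1, i.e., every non-identity element of G has infinitely many conjugates (equivalently, the centralizer of every non-identity element has infinite index in G). -/
universe u

/-- Condition (∗): for every nonempty finite subset `M` of `G ∖ {1}` and every `m ≥ 1`
there exist pairwise distinct `a b c` such that whenever
`(x₁⁻¹g₁x₁) ⋯ (x_m⁻¹g_mx_m) = 1` with `gᵢ ∈ M` and `xᵢ ∈ {a,b,c}`,
we have `xᵢ = xᵢ₊₁` for some `i`. -/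
def CondStar (G : Type*) [Group G] : Prop :=
  ∀ M : Finset G, M.Nonempty → (1 : G) ∉ M → ∀ m : ℕ, 0 < m →
    ∃ a b c : G, a ≠ b ∧ a ≠ c ∧ b ≠ c ∧
      ∀ g x : Fin m → G, (∀ i, g i ∈ M) → (∀ i, x i = a ∨ x i = b ∨ x i = c) →
        (List.ofFn fun i => (x i)⁻¹ * g i * x i).prod = 1 →
        ∃ i : Fin m, ∃ h : (i : ℕ) + 1 < m, x i = x ⟨(i : ℕ) + 1, h⟩

/-- If `G` satisfies condition (∗), then its FC-center is trivial: every
non-identity element of `G` has infinitely many conjugates. -/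
theorem statement3 {G : Type u} [Group G] (hstar : CondStar G) :
    ∀ g : G, g ≠ 1 → {h : G | ∃ x : G, x⁻¹ * g * x = h}.Infinite := by
  intro g hg
  classical
  by_contra hinf
  rw [Set.not_infinite] at hinf
  set C := hinf.toFinset with hC
  have hmemC : ∀ h : G, h ∈ C ↔ ∃ x : G, x⁻¹ * g * x = h := by
    intro h; rw [hC, Set.Finite.mem_toFinset]; rfl
  have hgC : g ∈ C := (hmemC g).mpr ⟨1, by group⟩
  set M := C ∪ C.image (·⁻¹) with hM
  have hMne : M.Nonempty := ⟨g, Finset.mem_union_left _ hgC⟩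
  have hne1 : ∀ h ∈ C, h ≠ 1 := by
    intro h hh h1
    obtain ⟨x, hx⟩ := (hmemC h).mp hh
    apply hg
    have : g = x * h * x⁻¹ := by rw [← hx]; group
    rw [h1] at this; simpa using this
  have h1M : (1 : G) ∉ M := by
    intro h1
    rcases Finset.mem_union.mp h1 with h | h
    · exact hne1 1 h rfl
    · obtain ⟨k, hk, hk1⟩ := Finset.mem_image.mp h
      exact hne1 k hk (by simpa using (congrArg Inv.inv hk1.symm).symm)
  obtain ⟨a, b, c, hab, -, -, hP⟩ := hstar M hMne h1M 2 two_pos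
  have hmem1 : b * (a⁻¹ * g⁻¹ * a) * b⁻¹ ∈ M := by
    apply Finset.mem_union_right
    apply Finset.mem_image.mpr
    refine ⟨b * (a⁻¹ * g * a) * b⁻¹, (hmemC _).mpr ⟨a * b⁻¹, by group⟩, by group⟩
  obtain ⟨i, hi, hxi⟩ := hP ![g, b * (a⁻¹ * g⁻¹ * a) * b⁻¹] ![a, b]
    (by
      intro i
      fin_cases i
      · exact Finset.mem_union_left _ hgC
      · exact hmem1)
    (by intro i; fin_cases i <;> simp)
    (by
      simp only [List.ofFn_succ, List.ofFn_zero, List.prod_cons, List.prod_nil,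
        Matrix.cons_val_zero, Matrix.cons_val_one, Matrix.head_cons, Fin.succ_zero_eq_one]
      group)
  fin_cases i
  · exact hab (by simpa using hxi)
  · simp at hi
end

section
/- Let S = (V, E, F) be a connected SR-graph (so V is finite and nonempty and S, viewed as the graph (V, E ∪ F), is connected) such that every connected component of H = (V, F) is complete. Then S has an SR-cycle if and only if c(G) + c(H) < |V| + 1, where G = (V, E). -/
universe u

/-- The SR-graph `(V, E, F)` has an SR-cycle: an (even) cycle
`v₁, w₁, v₂, w₂, …, v_s, w_s` on `2s ≥ 4` pairwise distinct vertices whose edges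
`vᵢwᵢ` lie in `E` and whose edges `wᵢvᵢ₊₁` (indices mod `s`) lie in `F`. -/
def HasSRCycle {V : Type*} (E F : SimpleGraph V) : Prop :=
  ∃ (s : ℕ) (hs : 2 ≤ s) (v w : Fin s → V),
    Function.Injective (fun p : Fin s × Bool => if p.2 then v p.1 else w p.1) ∧
    (∀ i : Fin s, E.Adj (v i) (w i)) ∧
    (∀ i : Fin s, F.Adj (w i) (v ⟨((i : ℕ) + 1) % s, Nat.mod_lt _ (by omega)⟩))

/-!
Let `B` be the bipartite graph on the components of `G = (V, E)` and of `H = (V, F)` with an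
edge `[u]_G — [u]_H` for each `u ∈ V`. Two distinct vertices in the same component of both `G`
and `H` would be joined by an edge of both, so distinct `u` give distinct edges and `B` has
exactly `|V|` edges; it is connected because `S` is. An SR-cycle `v₁ w₁ … v_s w_s` is the same
thing as a cycle of `B` with edges `v₁, w₁, …, w_s`, consecutive edges meeting alternately at a
`G`- and an `H`-component. Hence `S` has an SR-cycle iff the connected graph `B` is not a tree,
i.e. iff `c(G) + c(H) = |V(B)| < |E(B)| + 1 = |V| + 1`.
-/

open SimpleGraph Function

lemma Function.Periodic.apply_ne_apply_add_one {α : Type*} {u : ℕ → α} {n : ℕ}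
    (hper : Periodic u n) (hinj : Set.InjOn u (Set.Iio n)) (hn : 2 ≤ n) (i : ℕ) :
    u i ≠ u (i + 1) := by
  have hi := Nat.mod_lt i (by omega : 0 < n)
  rw [← hper.map_mod_nat i, ← hper.map_mod_nat (i + 1), ← Nat.mod_add_mod]
  intro h
  have := hinj hi (Nat.mod_lt _ (by omega)) h
  rcases Nat.lt_or_ge (i % n + 1) n with hlt | hge
  · rw [Nat.mod_eq_of_lt hlt] at this; omega
  · rw [show i % n + 1 = n by omega, Nat.mod_self] at this; omega

namespace SimpleGraph.Walk

variable {W : Type*} {G : SimpleGraph W} {x : W} (c : G.Walk x x)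

lemma getVert_mod_length {i : ℕ} (hi : i ≤ c.length) :
    c.getVert (i % c.length) = c.getVert i := by
  rcases hi.lt_or_eq with hi | rfl
  · rw [Nat.mod_eq_of_lt hi]
  · simp

lemma adj_getVert_mod_length (hc : 0 < c.length) (i : ℕ) :
    G.Adj (c.getVert (i % c.length)) (c.getVert ((i + 1) % c.length)) := by
  have hi := Nat.mod_lt i hc
  rw [← Nat.mod_add_mod, c.getVert_mod_length hi]
  exact c.adj_getVert_succ hi

lemma getElem_edges_eq_getVert_mod_length {i : ℕ} (hi : i < c.length) :
    c.edges[i]'(by simpa using hi) =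
      s(c.getVert (i % c.length), c.getVert ((i + 1) % c.length)) := by
  rw [c.getVert_mod_length hi.le, c.getVert_mod_length hi, getElem_edges_eq_edge_getElem_darts,
    darts_getElem_eq_getVert]
  rfl

end SimpleGraph.Walk

namespace SRGraph

variable {V : Type*} {E F : SimpleGraph V}

variable (E F) in
def componentEdge (u : V) : Sym2 (E.ConnectedComponent ⊕ F.ConnectedComponent) :=
  s(.inl (E.connectedComponentMk u), .inr (F.connectedComponentMk u))

variable (E F) in
def componentGraph : SimpleGraph (E.ConnectedComponent ⊕ F.ConnectedComponent) :=
  fromEdgeSet (Set.range (componentEdge E F))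

lemma componentGraph_adj (u : V) :
    (componentGraph E F).Adj (.inl (E.connectedComponentMk u)) (.inr (F.connectedComponentMk u)) :=
  (fromEdgeSet_adj _).2 ⟨⟨u, rfl⟩, Sum.inl_ne_inr⟩

lemma edgeSet_componentGraph : (componentGraph E F).edgeSet = Set.range (componentEdge E F) := by
  rw [componentGraph, edgeSet_fromEdgeSet, sdiff_eq_left, Set.disjoint_left]
  rintro _ ⟨u, rfl⟩
  simp [componentEdge]

lemma mem_componentEdge {x : E.ConnectedComponent ⊕ F.ConnectedComponent} {u : V} :
    x ∈ componentEdge E F u ↔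
      x = .inl (E.connectedComponentMk u) ∨ x = .inr (F.connectedComponentMk u) :=
  Sym2.mem_iff

lemma componentEdge_injective (hdisj : ∀ v w : V, ¬(E.Adj v w ∧ F.Adj v w))
    (hE : ∀ v w : V, E.Reachable v w → v ≠ w → E.Adj v w)
    (hF : ∀ v w : V, F.Reachable v w → v ≠ w → F.Adj v w) :
    Injective (componentEdge E F) := by
  intro u u' h
  simp only [componentEdge, Sym2.eq_iff, Sum.inl.injEq, Sum.inr.injEq, reduceCtorEq,
    and_false, or_false] at h
  by_contra hne
  exact hdisj u u' ⟨hE u u' (ConnectedComponent.exact h.1) hne,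
    hF u u' (ConnectedComponent.exact h.2) hne⟩

lemma card_edgeSet_componentGraph (hinj : Injective (componentEdge E F)) :
    Nat.card (componentGraph E F).edgeSet = Nat.card V := by
  rw [edgeSet_componentGraph, Nat.card_range_of_injective hinj]

lemma reachable_inl_of_reachable {u u' : V} (h : (E ⊔ F).Reachable u u') :
    (componentGraph E F).Reachable (.inl (E.connectedComponentMk u))
      (.inl (E.connectedComponentMk u')) := by
  rw [reachable_iff_reflTransGen] at h ⊢
  refine Relation.ReflTransGen.lift' (fun u => Sum.inl (E.connectedComponentMk u)) ?_ _ _ h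
  rintro a b (hab | hab)
  · simp only [onFun, ConnectedComponent.sound hab.reachable]
    exact .refl
  · rw [onFun, ← reachable_iff_reflTransGen]
    refine (componentGraph_adj a).reachable.trans ?_
    rw [ConnectedComponent.sound hab.reachable]
    exact (componentGraph_adj b).reachable.symm

lemma componentGraph_connected (hconn : (E ⊔ F).Connected) : (componentGraph E F).Connected := by
  obtain ⟨u₀⟩ := hconn.nonempty
  have h : ∀ x, (componentGraph E F).Reachable (.inl (E.connectedComponentMk u₀)) x := by
    rintro (c | c)
    · obtain ⟨u, rfl⟩ := c.exists_rep
      exact reachable_inl_of_reachable (hconn u₀ u)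
    · obtain ⟨u, rfl⟩ := c.exists_rep
      exact (reachable_inl_of_reachable (hconn u₀ u)).trans (componentGraph_adj u).reachable
  exact connected_iff_exists_forall_reachable _ |>.2 ⟨_, h⟩

lemma deleteEdges_componentGraph_adj (hinj : Injective (componentEdge E F)) {u u' : V}
    (h : u' ≠ u) : ((componentGraph E F).deleteEdges {componentEdge E F u}).Adj
      (.inl (E.connectedComponentMk u')) (.inr (F.connectedComponentMk u')) :=
  deleteEdges_adj.2 ⟨componentGraph_adj u', fun h' => h (hinj h')⟩

/-- The edge of `v 0` is not a bridge: without it, its ends are still joined through the edges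
of `w 0, v 1, w 1, …, w (s-1)`. -/
lemma not_isAcyclic_of_hasSRCycle (hinj : Injective (componentEdge E F)) (h : HasSRCycle E F) :
    ¬ (componentGraph E F).IsAcyclic := by
  obtain ⟨s, hs, v, w, hvw, hE, hF⟩ := h
  set a : ℕ → V := fun k => v ⟨k % s, Nat.mod_lt _ (by omega)⟩
  set b : ℕ → V := fun k => w ⟨k % s, Nat.mod_lt _ (by omega)⟩
  have hab (k : ℕ) : E.connectedComponentMk (a k) = E.connectedComponentMk (b k) :=
    ConnectedComponent.sound (hE _).reachable
  have hba (k : ℕ) : F.connectedComponentMk (b k) = F.connectedComponentMk (a (k + 1)) := by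
    have := ConnectedComponent.sound (hF ⟨k % s, Nat.mod_lt _ (by omega)⟩).reachable
    simpa only [Nat.mod_add_mod] using this
  have ha (k : ℕ) (hk : k % s ≠ 0) : a k ≠ a 0 := fun h => hk <| by
    simpa [Fin.ext_iff] using @hvw (⟨k % s, _⟩, true) (⟨0 % s, _⟩, true) h
  have hb (k : ℕ) : b k ≠ a 0 := fun h => by
    simpa using @hvw (⟨k % s, _⟩, false) (⟨0 % s, _⟩, true) h
  set B' := (componentGraph E F).deleteEdges {componentEdge E F (a 0)}
  have step (k : ℕ) : B'.Reachable (.inl (E.connectedComponentMk (a k)))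
      (.inr (F.connectedComponentMk (a (k + 1)))) := by
    rw [hab, ← hba]
    exact (deleteEdges_componentGraph_adj hinj (hb k)).reachable
  have chain : ∀ k < s, B'.Reachable (.inl (E.connectedComponentMk (a 0)))
      (.inr (F.connectedComponentMk (a (k + 1)))) := by
    intro k hk
    induction k with
    | zero => exact step 0
    | succ k ih =>
      have hback := (deleteEdges_componentGraph_adj hinj (ha (k + 1) (by
        rw [Nat.mod_eq_of_lt hk]; omega))).symm.reachable
      exact ((ih (by omega)).trans hback).trans (step (k + 1))
  have hcycle : a s = a 0 := by simp [a]
  have hclosed : B'.Reachable (.inl (E.connectedComponentMk (a 0)))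
      (.inr (F.connectedComponentMk (a 0))) := by
    simpa [Nat.sub_add_cancel (by omega : 1 ≤ s), hcycle] using chain (s - 1) (by omega)
  exact fun hacyclic => isAcyclic_iff_forall_adj_isBridge.1 hacyclic (componentGraph_adj _) hclosed

lemma hasSRCycle_of_periodic {s : ℕ} (hs : 2 ≤ s) {u : ℕ → V} (hper : Periodic u (2 * s))
    (hinj : Set.InjOn u (Set.Iio (2 * s))) (hE : ∀ k, E.Adj (u (2 * k)) (u (2 * k + 1)))
    (hF : ∀ k, F.Adj (u (2 * k + 1)) (u (2 * k + 2))) : HasSRCycle E F := by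
  refine ⟨s, hs, fun k => u (2 * k), fun k => u (2 * k + 1), ?_, fun k => hE k, fun k => ?_⟩
  · rintro ⟨⟨k, hk⟩, _ | _⟩ ⟨⟨l, hl⟩, _ | _⟩ h <;>
      have := hinj (by simp; omega) (by simp; omega) h <;> simp at this ⊢ <;> omega
  · simpa only [← Nat.mul_mod_mul_left, hper.map_mod_nat, mul_add] using hF k

lemma isLeft_ne_of_adj {x y : E.ConnectedComponent ⊕ F.ConnectedComponent}
    (h : (componentGraph E F).Adj x y) : x.isLeft ≠ y.isLeft := by
  obtain ⟨⟨u, hu⟩, -⟩ := (fromEdgeSet_adj _).1 h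
  rcases Sym2.eq_iff.1 hu with ⟨rfl, rfl⟩ | ⟨rfl, rfl⟩ <;> simp

lemma isLeft_getVert_iff {c₀ : F.ConnectedComponent}
    {y : E.ConnectedComponent ⊕ F.ConnectedComponent} (p : (componentGraph E F).Walk (.inr c₀) y)
    {i : ℕ} (hi : i ≤ p.length) :
    (p.getVert i).isLeft ↔ Odd i := by
  induction i with
  | zero => simp
  | succ i ih =>
    have := isLeft_ne_of_adj (p.adj_getVert_succ (by omega : i < p.length))
    rw [Nat.odd_add_one, ← ih (by omega)]
    cases h : (p.getVert i).isLeft <;> simp_all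

lemma reachable_of_inl_mem_componentEdge {d : E.ConnectedComponent} {u u' : V}
    (hu : .inl d ∈ componentEdge E F u) (hu' : .inl d ∈ componentEdge E F u') :
    E.Reachable u u' := by
  simp only [mem_componentEdge, Sum.inl.injEq, reduceCtorEq, or_false] at hu hu'
  exact ConnectedComponent.exact (hu.symm.trans hu')

lemma reachable_of_inr_mem_componentEdge {d : F.ConnectedComponent} {u u' : V}
    (hu : .inr d ∈ componentEdge E F u) (hu' : .inr d ∈ componentEdge E F u') :
    F.Reachable u u' := by
  simp only [mem_componentEdge, Sum.inr.injEq, reduceCtorEq, false_or] at hu hu'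
  exact ConnectedComponent.exact (hu.symm.trans hu')

/-- The edges of a closed circuit `c` of the component graph, read cyclically, are the vertices
`u 0, u 1, …` of an SR-cycle: consecutive edges share a vertex of `c`, which lies on the
`E`-side exactly at odd positions. -/
lemma hasSRCycle_of_isCircuit (hE : ∀ v w : V, E.Reachable v w → v ≠ w → E.Adj v w)
    (hF : ∀ v w : V, F.Reachable v w → v ≠ w → F.Adj v w) {c₀ : F.ConnectedComponent}
    {c : (componentGraph E F).Walk (.inr c₀) (.inr c₀)} (hc : c.IsCircuit) :
    HasSRCycle E F := by
  have : Nonempty V := c₀.nonempty_supp.to_subtype.map Subtype.val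
  set n := c.length
  have hn : 3 ≤ n := hc.three_le_length
  obtain ⟨s, hs⟩ : Even n := by simpa using isLeft_getVert_iff c le_rfl
  set Y : ℕ → E.ConnectedComponent ⊕ F.ConnectedComponent := fun i => c.getVert (i % n)
  have hYper : Periodic Y n := fun i => by simp [Y]
  have hYleft (i : ℕ) : (Y i).isLeft ↔ Odd i := by
    rw [isLeft_getVert_iff c (Nat.mod_lt i (by omega)).le, Nat.odd_iff, Nat.odd_iff,
      Nat.mod_mod_of_dvd i ⟨s, by omega⟩]
  set u : ℕ → V := fun i => invFun (componentEdge E F) s(Y i, Y (i + 1))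
  have hu (i : ℕ) : componentEdge E F (u i) = s(Y i, Y (i + 1)) := by
    refine invFun_eq ?_
    rw [← Set.mem_range, ← edgeSet_componentGraph]
    exact c.adj_getVert_mod_length (by omega) i
  have hper : Periodic u n := fun i => by simp only [u, add_right_comm, hYper _]
  have hinj : Set.InjOn u (Set.Iio n) := by
    intro i hi j hj hij
    have := congrArg (componentEdge E F) hij
    rwa [hu, hu, ← c.getElem_edges_eq_getVert_mod_length hi,
      ← c.getElem_edges_eq_getVert_mod_length hj, hc.edges_nodup.getElem_inj_iff] at this
  have hne := hper.apply_ne_apply_add_one hinj (by omega)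
  have hmem (i : ℕ) : Y (i + 1) ∈ componentEdge E F (u i) ∧
      Y (i + 1) ∈ componentEdge E F (u (i + 1)) := by
    rw [hu, hu]
    exact ⟨Sym2.mem_mk_right _ _, Sym2.mem_mk_left _ _⟩
  rw [hs, ← two_mul] at hper hinj
  refine hasSRCycle_of_periodic (by omega) hper hinj (fun k => hE _ _ ?_ (hne _))
    (fun k => hF _ _ ?_ (hne _))
  · obtain ⟨d, hd⟩ := Sum.isLeft_iff.1 ((hYleft (2 * k + 1)).2 (odd_two_mul_add_one k))
    exact reachable_of_inl_mem_componentEdge (hd ▸ (hmem (2 * k)).1) (hd ▸ (hmem (2 * k)).2)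
  · obtain ⟨d, hd⟩ := Sum.isRight_iff.1 <| Sum.not_isLeft.1 <| (hYleft (2 * k + 2)).not.2 <|
      Nat.not_odd_iff_even.2 ⟨k + 1, by ring⟩
    exact reachable_of_inr_mem_componentEdge (hd ▸ (hmem (2 * k + 1)).1)
      (hd ▸ (hmem (2 * k + 1)).2)

lemma exists_isCycle_of_not_isAcyclic (h : ¬ (componentGraph E F).IsAcyclic) :
    ∃ (c₀ : F.ConnectedComponent) (c : (componentGraph E F).Walk (.inr c₀) (.inr c₀)),
      c.IsCycle := by
  classical
  simp only [IsAcyclic, not_forall, not_not] at h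
  obtain ⟨x | c₀, c, hc⟩ := h
  · have hadj := c.adj_getVert_succ (i := 0) (by have := hc.three_le_length; omega)
    obtain ⟨c₀, hc₀⟩ := Sum.isRight_iff.1 <| Sum.isLeft_eq_false.1 <| by
      simpa using (isLeft_ne_of_adj hadj).symm
    exact ⟨c₀, c.rotate _ (hc₀ ▸ c.getVert_mem_support 1), hc.rotate _⟩
  · exact ⟨c₀, c, hc⟩

theorem hasSRCycle_iff_not_isAcyclic (hdisj : ∀ v w : V, ¬(E.Adj v w ∧ F.Adj v w))
    (hE : ∀ v w : V, E.Reachable v w → v ≠ w → E.Adj v w)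
    (hF : ∀ v w : V, F.Reachable v w → v ≠ w → F.Adj v w) :
    HasSRCycle E F ↔ ¬ (componentGraph E F).IsAcyclic := by
  refine ⟨not_isAcyclic_of_hasSRCycle (componentEdge_injective hdisj hE hF), fun h => ?_⟩
  obtain ⟨c₀, c, hc⟩ := exists_isCycle_of_not_isAcyclic h
  exact hasSRCycle_of_isCircuit hE hF hc.isCircuit

end SRGraph

open SRGraph

theorem statement5_general {V : Type u} [Fintype V]
    (E F : SimpleGraph V)
    (hdisj : ∀ v w : V, ¬(E.Adj v w ∧ F.Adj v w))
    (hE : ∀ v w : V, E.Reachable v w → v ≠ w → E.Adj v w)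
    (hF : ∀ v w : V, F.Reachable v w → v ≠ w → F.Adj v w)
    (hconn : (E ⊔ F).Connected) :
    HasSRCycle E F ↔
      Nat.card E.ConnectedComponent + Nat.card F.ConnectedComponent < Fintype.card V + 1 := by
  have hB := componentGraph_connected hconn
  have hacyclic : (componentGraph E F).IsAcyclic ↔ Nat.card (componentGraph E F).edgeSet + 1 =
      Nat.card (E.ConnectedComponent ⊕ F.ConnectedComponent) := by
    have := isTree_iff_connected_and_card (G := componentGraph E F)
    rwa [isTree_iff, and_iff_right hB, and_iff_right hB] at this
  have hle := hB.card_vert_le_card_edgeSet_add_one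
  rw [card_edgeSet_componentGraph (componentEdge_injective hdisj hE hF), Nat.card_sum,
    Nat.card_eq_fintype_card (α := V)] at hacyclic hle
  rw [hasSRCycle_iff_not_isAcyclic hdisj hE hF, hacyclic]
  omega

/-- A connected SR-graph all of whose `F`-components are complete has an SR-cycle
if and only if `c(G) + c(H) < |V| + 1`. -/
theorem statement5 {V : Type u} [Fintype V] [Nonempty V]
    (E F : SimpleGraph V)
    (hdisj : ∀ v w : V, ¬(E.Adj v w ∧ F.Adj v w))
    (hE : ∀ v w : V, E.Reachable v w → v ≠ w → E.Adj v w)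
    (hF : ∀ v w : V, F.Reachable v w → v ≠ w → F.Adj v w)
    (hconn : (E ⊔ F).Connected) :
    HasSRCycle E F ↔
      Nat.card E.ConnectedComponent + Nat.card F.ConnectedComponent < Fintype.card V + 1 :=
  statement5_general E F hdisj hE hF hconn
end
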